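/- Let M be a separable metrizable space. Then: (1) ω ≥_T 𝐤(M) if and only if M is locally compact, i.e. M^# = ∅; (2) (ℕ→ℕ, ≤_∞) ≥_T 𝐤(M) if and only if M′ is compact (possibly empty); (3) (ℕ→ℕ, ≤_∞) & ω ≥_T 𝐤(M) if and only if M′ is σ-compact and M^# is compact; (4) (ℕ→ℕ, ≤_∞) × ω ≥_T 𝐤(M) if and only if M′ is σ-compact. -/

import Mathlib

open Set Topology Filter

universe u v u' v'

/-- A relation: a triple consisting of a domain, a range, and a relation between them. -/
structure TRel : Type (max (u + 1) (v + 1)) where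
  dom : Type u
  rng : Type v
  rel : dom → rng → Prop

namespace TRel

/-- A Tukey morphism from `A` to `B`: `A ≥_T B`. -/
def Tukey (A : TRel.{u, v}) (B : TRel.{u', v'}) : Prop :=
  ∃ (ψ : B.dom → A.dom) (φ : A.rng → B.rng),
    ∀ (b : B.dom) (a : A.rng), A.rel (ψ b) a → B.rel b (φ a)

/-- Tukey equivalence. -/
def TukeyEquiv (A : TRel.{u, v}) (B : TRel.{u', v'}) : Prop :=
  A.Tukey B ∧ B.Tukey A

/-- `C` is cofinal in the relation `A`. -/
def Cofinal (A : TRel) (C : Set A.rng) : Prop :=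
  ∀ x : A.dom, ∃ y ∈ C, A.rel x y

/-- `U` is bounded in the relation `A`. -/
def Bounded (A : TRel) (U : Set A.dom) : Prop :=
  ∃ y : A.rng, ∀ x ∈ U, A.rel x y

/-- The cofinality of a relation: the least cardinality of a cofinal set. -/
noncomputable def cofin (A : TRel) : Cardinal :=
  sInf {c | ∃ C : Set A.rng, A.Cofinal C ∧ Cardinal.mk C = c}

/-- The additivity of a relation: the least cardinality of an unbounded set. -/
noncomputable def addit (A : TRel) : Cardinal :=
  sInf {c | ∃ U : Set A.dom, ¬A.Bounded U ∧ Cardinal.mk U = c}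

/-- A relation has calibre `(κ, lam)` if every κ-sized subset of the domain has
a lam-sized subset which is bounded. -/
def Calibre (A : TRel) (κ lam : Cardinal) : Prop :=
  ∀ S : Set A.dom, Cardinal.mk S = κ → ∃ T ⊆ S, Cardinal.mk T = lam ∧ A.Bounded T

/-- The product of two relations. -/
def prod (A : TRel.{u, v}) (B : TRel.{u', v'}) : TRel :=
  ⟨A.dom × B.dom, A.rng × B.rng, fun x y => A.rel x.1 y.1 ∧ B.rel x.2 y.2⟩

/-- `A & B`, read `A with B`. -/
def with' (A : TRel.{u, v}) (B : TRel.{u', v'}) : TRel :=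
  ⟨A.dom ⊕ B.dom, A.rng × B.rng,
    fun x y => Sum.elim (fun a => A.rel a y.1) (fun b => B.rel b y.2) x⟩

/-- The sum `A + B` of two relations. -/
def add (A : TRel.{u, v}) (B : TRel.{u', v'}) : TRel :=
  ⟨A.dom ⊕ B.dom, A.rng ⊕ B.rng,
    fun x y =>
      match x, y with
      | Sum.inl a, Sum.inl b => A.rel a b
      | Sum.inr a, Sum.inr b => B.rel a b
      | _, _ => False⟩

/-- The sum of a family of relations. -/
def sigmaSum {ι : Type*} (A : ι → TRel.{u, v}) : TRel :=
  ⟨Σ i, (A i).dom, Σ i, (A i).rng,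
    fun x y => ∃ (i : ι) (a : (A i).dom) (b : (A i).rng),
      x = ⟨i, a⟩ ∧ y = ⟨i, b⟩ ∧ (A i).rel a b⟩

end TRel

/-- `f ≤* g`: eventual domination. -/
def leStar (f g : ℕ → ℕ) : Prop := {n | ¬f n ≤ g n}.Finite

/-- `f ≤_∞ g`: `f n ≤ g n` for infinitely many `n`. -/
def leInf (f g : ℕ → ℕ) : Prop := {n | f n ≤ g n}.Infinite

/-- The relation `(ℕ → ℕ, ≤*)`. -/
def leStarRel : TRel := ⟨ℕ → ℕ, ℕ → ℕ, leStar⟩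

/-- The relation `(ℕ → ℕ, ≤_∞)`. -/
def leInfRel : TRel := ⟨ℕ → ℕ, ℕ → ℕ, leInf⟩

/-- The relation `ω = (ℕ, ℕ, ≤)`. -/
def omegaRel : TRel := ⟨ℕ, ℕ, (· ≤ ·)⟩

/-- The Baire space `(ℕ → ℕ, ≤)` with the coordinatewise order. -/
def baireRel : TRel := ⟨ℕ → ℕ, ℕ → ℕ, (· ≤ ·)⟩

/-- The bounding number `𝔟`. -/
noncomputable def bCard : Cardinal := leStarRel.addit

/-- The dominating number `𝔡`. -/
noncomputable def dCard : Cardinal := leStarRel.cofin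

section Topology

variable (X : Type u) [TopologicalSpace X]

/-- The infinite convergent sequences with their limit: images of embeddings of `ω + 1`. -/
def CSplus : Set (Set X) :=
  {S | ∃ e : OnePoint ℕ → X, Topology.IsEmbedding e ∧ S = Set.range e}

/-- The infinite convergent sequences without their limit. -/
def CS : Set (Set X) :=
  {S | ∃ e : OnePoint ℕ → X, Topology.IsEmbedding e ∧
    S = e '' Set.range ((↑) : ℕ → OnePoint ℕ)}

/-- The infinite convergent sequences converging to `x`, without the limit `x`. -/
def CSpt {X : Type u} [TopologicalSpace X] (x : X) : Set (Set X) :=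
  {S | ∃ e : OnePoint ℕ → X, Topology.IsEmbedding e ∧ e OnePoint.infty = x ∧
    S = e '' Set.range ((↑) : ℕ → OnePoint ℕ)}

/-- The non-closed subsets of `X`. -/
def NC : Set (Set X) := {F | ¬IsClosed F}

/-- `S ̸⊥ T` : `S ∩ T` is not closed in the subspace `T`. -/
def NotClosedIn {X : Type u} [TopologicalSpace X] (S T : Set X) : Prop :=
  ¬∃ C : Set X, IsClosed C ∧ S ∩ T = C ∩ T

/-- The k-structure `𝐤(X) = (CS(X), K(X), ̸⊥)`. -/
def kRel : TRel :=
  ⟨↥(CS X), {K : Set X // IsCompact K}, fun S K => NotClosedIn S.1 K.1⟩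

/-- The compact-cover structure `𝐤𝐜(X) = (X, K(X), ∈)`. -/
def kcRel : TRel :=
  ⟨X, {K : Set X // IsCompact K}, fun x K => x ∈ K.1⟩

/-- The sequential structure `𝐬𝐞𝐪(X) = (CS(X), CS(X), ii)`. -/
def seqRel : TRel :=
  ⟨↥(CS X), ↥(CS X), fun S T => (S.1 ∩ T.1).Infinite⟩

/-- The relation `𝐬𝐞𝐪(x, X) = (CS(x,X), CS(x,X), ii)`. -/
def seqPtRel {X : Type u} [TopologicalSpace X] (x : X) : TRel :=
  ⟨↥(CSpt x), ↥(CSpt x), fun S T => (S.1 ∩ T.1).Infinite⟩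

/-- The set `X′` of non-isolated points of `X`. -/
def nonIsolated : Set X := {x | ¬IsOpen ({x} : Set X)}

/-- The set `X^#` of points of `X` with no compact neighborhood. -/
def nonLC : Set X := {x | ¬∃ K : Set X, IsCompact K ∧ K ∈ nhds x}

end Topology

/-- The relation `P(κ) = ((([κ]^{<ω})^ω)_∞, i_∞)`. -/
def Prel (κ : Cardinal.{u}) : TRel :=
  ⟨{F : ℕ → Finset κ.out // {n | F n ≠ ∅}.Infinite},
   {F : ℕ → Finset κ.out // {n | F n ≠ ∅}.Infinite},
   fun F G => {n | ∃ x, x ∈ F.1 n ∧ x ∈ G.1 n}.Infinite⟩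

/-- The relation `((∏_n [κ_n]^{<ω})_∞, i_∞)` for a sequence of cardinals `κ_n = c n`. -/
def Qrel (c : ℕ → Cardinal.{u}) : TRel :=
  ⟨{F : (n : ℕ) → Finset (c n).out // {n | F n ≠ ∅}.Infinite},
   {F : (n : ℕ) → Finset (c n).out // {n | F n ≠ ∅}.Infinite},
   fun F G => {n | ∃ x, x ∈ F.1 n ∧ x ∈ G.1 n}.Infinite⟩

/-- The relation `(κ, =)` for a cardinal `κ`. -/
def eqCardRel (κ : Cardinal.{u}) : TRel := ⟨κ.out, κ.out, Eq⟩

/-- The relation `(Λ, =)` for a set `Λ`. -/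
def eqSetRel {X : Type u} (A : Set X) : TRel := ⟨↥A, ↥A, Eq⟩

/-- The relation `S(κ) = Σ_n P(κ_n) × (κ_n, =)` for a sequence of cardinals `κ_n = c n`. -/
def Srel (c : ℕ → Cardinal.{u}) : TRel :=
  TRel.sigmaSum fun n => (Prel (c n)).prod (eqCardRel (c n))

/-- The relation `𝟎` with empty domain and range. -/
def zeroRel : TRel := ⟨PEmpty, PEmpty, fun _ _ => False⟩


/-!
A sequence `S` converging to `x ∉ S` fails to be closed in a compact set `K` exactly when
`x ∈ K` and `K` contains infinitely many points of `S`. A Tukey map into `𝐤(M)` is therefore a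
rule assigning compact sets that contain the limit of a sequence and catch the sequence
infinitely often.

Necessity. Near a point of `M^#` there are sequences escaping any countably many given compact
sets, and no `ω`-indexed family can catch them. Every countable subset of `(ℕ → ℕ, ≤_∞)` is
bounded, so the limits of countably many sequences all lie in one compact set. By separability
this puts `M′` (for `× ω`: each level set of the `ω`-coordinate in `M′`), respectively `M^#`,
inside a compact set.

Sufficiency. If `M′` is σ-compact, so is `M`, because its isolated points are countable. Take a
compact exhaustion `(Dₙ)` of `M`. For compact `B` the sets
`B ∪ ⋃ₖ (D_{f k} ∩ cthickening (1/(k+1)) B)` are compact, and they catch a sequence converging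
into `B` as soon as `f` is `≤_∞`-above a function read off from the sequence. Points having a
compact neighbourhood are handled by an increasing sequence of compact sets (Lindelöf): each such
point has one of these sets as a neighbourhood.
-/

open Function TopologicalSpace

theorem TRel.Tukey.trans {A B C : TRel} (hAB : A.Tukey B) (hBC : B.Tukey C) : A.Tukey C :=
  let ⟨ψ₁, φ₁, h₁⟩ := hAB
  let ⟨ψ₂, φ₂, h₂⟩ := hBC
  ⟨ψ₁ ∘ ψ₂, φ₂ ∘ φ₁, fun c a h => h₂ c (φ₁ a) (h₁ (ψ₂ c) a h)⟩

theorem TRel.prod_tukey_with (A B : TRel) (a₀ : A.dom) (b₀ : B.dom) :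
    (A.prod B).Tukey (A.with' B) :=
  ⟨Sum.elim (fun a => (a, b₀)) (fun b => (a₀, b)), id, by rintro (a | b) _ h; exacts [h.1, h.2]⟩

theorem exists_forall_leInf_of_countable {ι : Type*} {Q : Set ι} (hQ : Q.Countable)
    (g : ι → ℕ → ℕ) : ∃ f, ∀ q ∈ Q, leInf (g q) f := by
  rcases Q.eq_empty_or_nonempty with rfl | hne
  · exact ⟨0, fun _ h => h.elim⟩
  obtain ⟨e, rfl⟩ := hQ.exists_eq_range hne
  refine ⟨fun n => (Finset.range (n + 1)).sup fun i => g (e i) n, ?_⟩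
  rintro _ ⟨i, rfl⟩
  exact (Ici_infinite i).mono fun n hn =>
    Finset.le_sup (f := fun j => g (e j) n) (Finset.mem_range.2 (Nat.lt_succ_of_le hn))

section ConvergentSequences

variable {X : Type*} [TopologicalSpace X]

theorem NotClosedIn.mono {S K K' : Set X} (h : NotClosedIn S K) (hK : K ⊆ K') :
    NotClosedIn S K' := by
  rintro ⟨C, hC, hCK⟩
  refine h ⟨C, hC, ?_⟩
  calc S ∩ K = S ∩ K' ∩ K := by rw [inter_assoc, inter_eq_right.2 hK]
    _ = C ∩ K := by rw [hCK, inter_assoc, inter_eq_right.2 hK]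

theorem isClosed_nonIsolated : IsClosed (nonIsolated X) := by
  refine isOpen_compl_iff.1 (isOpen_iff_mem_nhds.2 fun x hx => ?_)
  have hx : IsOpen {x} := not_not.1 hx
  exact mem_of_superset (hx.mem_nhds rfl) fun y (hy : y = x) => hy ▸ not_not_intro hx

theorem isClosed_nonLC : IsClosed (nonLC X) := by
  refine isOpen_compl_iff.1 (isOpen_iff_mem_nhds.2 fun x hx => ?_)
  obtain ⟨K, hK, hKx⟩ := not_not.1 hx
  exact mem_of_superset (interior_mem_nhds.2 hKx) fun y hy =>
    not_not_intro ⟨K, hK, mem_interior_iff_mem_nhds.1 hy⟩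

theorem exists_seq_of_mem_CSpt {S : Set X} {x : X} (hS : S ∈ CSpt x) :
    ∃ u : ℕ → X, x ∉ range u ∧ Tendsto u atTop (𝓝 x) ∧ S = range u := by
  obtain ⟨e, he, rfl, rfl⟩ := hS
  refine ⟨fun n => e n, ?_, (OnePoint.continuous_iff_from_nat e).1 he.continuous, ?_⟩
  · rintro ⟨n, hn⟩
    exact OnePoint.coe_ne_infty n (he.injective hn)
  · rw [← range_comp]
    rfl

theorem range_mem_CSpt_of_injective [T2Space X] {w : ℕ → X} {x : X} (hw : Injective w)
    (hx : x ∉ range w) (hlim : Tendsto w atTop (𝓝 x)) : range w ∈ CSpt x := by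
  have hinj : Injective fun o : OnePoint ℕ => o.elim x w := by
    rintro (_ | m) (_ | n) h
    exacts [rfl, (hx ⟨n, h.symm⟩).elim, (hx ⟨m, h⟩).elim, congrArg _ (hw h)]
  refine ⟨fun o => o.elim x w, ?_, rfl, by rw [← range_comp]; rfl⟩
  exact (((OnePoint.continuous_iff_from_nat _).2 hlim).isClosedEmbedding hinj).isEmbedding

theorem range_mem_CSpt [T2Space X] {u : ℕ → X} {x : X} (hx : x ∉ range u)
    (hlim : Tendsto u atTop (𝓝 x)) : range u ∈ CSpt x := by
  have hinf : (range u).Infinite := fun hfin =>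
    hx (hfin.isClosed.mem_of_tendsto hlim (Eventually.of_forall mem_range_self))
  -- `u` need not be injective, so we re-enumerate its range bijectively.
  have := hinf.to_subtype
  have := (countable_range u).to_subtype
  obtain ⟨_⟩ := nonempty_denumerable (range u)
  set e := Denumerable.eqv (range u)
  have hval : Tendsto ((↑) : range u → X) cofinite (𝓝 x) :=
    calc map ((↑) : range u → X) cofinite ≤ map (↑) (map (rangeFactorization u) cofinite) :=
          map_mono rangeFactorization_surjective.le_map_cofinite
      _ = map u cofinite := by rw [map_map]; rfl
      _ ≤ 𝓝 x := Nat.cofinite_eq_atTop ▸ hlim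
  have hrange : range (Subtype.val ∘ e.symm) = range u := by
    rw [range_comp, e.symm.surjective.range_eq, image_univ, Subtype.range_coe]
  rw [← hrange] at hx ⊢
  refine range_mem_CSpt_of_injective (Subtype.val_injective.comp e.symm.injective) hx ?_
  rw [← Nat.cofinite_eq_atTop]
  exact hval.comp e.symm.injective.tendsto_cofinite

theorem CSpt_subset_CS (x : X) : CSpt x ⊆ CS X := fun _ ⟨e, he, _, hS⟩ => ⟨e, he, hS⟩

theorem exists_mem_CSpt_of_mem_CS {S : Set X} (hS : S ∈ CS X) : ∃ x, S ∈ CSpt x :=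
  let ⟨e, he, hS⟩ := hS
  ⟨e OnePoint.infty, e, he, rfl, hS⟩

theorem notClosedIn_range_iff [T2Space X] {u : ℕ → X} {x : X} (hx : x ∉ range u)
    (hlim : Tendsto u atTop (𝓝 x)) {K : Set X} :
    NotClosedIn (range u) K ↔ x ∈ K ∧ ∃ᶠ n in atTop, u n ∈ K := by
  constructor
  · intro h
    by_contra hcon
    apply h
    by_cases hxK : x ∈ K
    · obtain ⟨N, hN⟩ := eventually_atTop.1 (not_frequently.1 fun hfreq => hcon ⟨hxK, hfreq⟩)
      have hfin : (range u ∩ K).Finite := ((finite_Iio N).image u).subset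
        fun _ ⟨⟨n, hn⟩, hyK⟩ => ⟨n, not_le.1 fun hNn => hN n hNn (hn ▸ hyK), hn⟩
      exact ⟨range u ∩ K, hfin.isClosed, by rw [inter_assoc, inter_self]⟩
    · exact ⟨insert x (range u), hlim.isCompact_insert_range.isClosed,
        (insert_inter_of_notMem hxK).symm⟩
  · rintro ⟨hxK, hfreq⟩ ⟨C, hC, hCK⟩
    have hcl : x ∈ closure (range u ∩ K) :=
      mem_closure_of_frequently_of_tendsto (hfreq.mono fun n hn => ⟨mem_range_self n, hn⟩) hlim
    rw [hCK] at hcl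
    have hxC : x ∈ C := hC.closure_subset (closure_mono inter_subset_left hcl)
    exact hx (hCK.symm ▸ ⟨hxC, hxK⟩ : x ∈ range u ∩ K).1

theorem mem_of_notClosedIn [T2Space X] {S K : Set X} {x : X} (hS : S ∈ CSpt x)
    (h : NotClosedIn S K) : x ∈ K := by
  obtain ⟨u, hx, hlim, rfl⟩ := exists_seq_of_mem_CSpt hS
  exact ((notClosedIn_range_iff hx hlim).1 h).1

theorem notClosedIn_of_mem_nhds [T2Space X] {S K : Set X} {x : X} (hS : S ∈ CSpt x)
    (hK : K ∈ 𝓝 x) : NotClosedIn S K := by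
  obtain ⟨u, hx, hlim, rfl⟩ := exists_seq_of_mem_CSpt hS
  exact (notClosedIn_range_iff hx hlim).2 ⟨mem_of_mem_nhds hK, (hlim.eventually_mem hK).frequently⟩

theorem mem_nonIsolated_of_mem_CSpt {S : Set X} {x : X} (hS : S ∈ CSpt x) :
    x ∈ nonIsolated X := fun hopen => by
  obtain ⟨u, hx, hlim, -⟩ := exists_seq_of_mem_CSpt hS
  obtain ⟨n, hn⟩ := (hlim.eventually_mem (hopen.mem_nhds rfl)).exists
  exact hx ⟨n, hn⟩

theorem exists_seq_tendsto_of_forall_mem_closure [FirstCountableTopology X] {x : X}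
    {A : ℕ → Set X} (h : ∀ n, x ∈ closure (A n)) :
    ∃ u : ℕ → X, (∀ n, u n ∈ A n) ∧ Tendsto u atTop (𝓝 x) := by
  obtain ⟨s, hs⟩ := (𝓝 x).exists_antitone_basis
  choose u hu using fun n => mem_closure_iff_nhds.1 (h n) (s n) (hs.mem n)
  exact ⟨u, fun n => (hu n).2, hs.tendsto fun n => (hu n).1⟩

theorem exists_mem_CSpt_of_mem_nonIsolated [T2Space X] [FirstCountableTopology X] {x : X}
    (hx : x ∈ nonIsolated X) : ∃ S, S ∈ CSpt x := by
  have hcl : x ∈ closure {x}ᶜ := by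
    rw [closure_compl]
    intro hint
    exact hx (Subset.antisymm interior_subset (singleton_subset_iff.2 hint) ▸ isOpen_interior)
  obtain ⟨u, hu, hlim⟩ := exists_seq_tendsto_of_forall_mem_closure fun _ => hcl
  exact ⟨_, range_mem_CSpt (fun ⟨n, hn⟩ => hu n hn) hlim⟩

theorem exists_mem_CSpt_forall_not_notClosedIn [T2Space X] [FirstCountableTopology X] {x : X}
    (hx : x ∈ nonLC X) {K : ℕ → Set X} (hK : ∀ n, IsCompact (K n)) :
    ∃ S ∈ CSpt x, ∀ n, ¬NotClosedIn S (K n) := by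
  have hcl : ∀ n, x ∈ closure (insert x (accumulate K n))ᶜ := fun n => by
    rw [closure_compl, mem_compl_iff, mem_interior_iff_mem_nhds]
    exact fun hnhds => hx ⟨_, (isCompact_accumulate hK n).insert x, hnhds⟩
  obtain ⟨u, hu, hlim⟩ := exists_seq_tendsto_of_forall_mem_closure hcl
  have hx' : x ∉ range u := fun ⟨n, hn⟩ => hu n (hn ▸ mem_insert _ _)
  refine ⟨range u, range_mem_CSpt hx' hlim, fun m hm => ?_⟩
  refine ((notClosedIn_range_iff hx' hlim).1 hm).2 (eventually_atTop.2 ⟨m, fun n hmn hn => ?_⟩)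
  exact hu n (mem_insert_of_mem x (monotone_accumulate hmn (subset_accumulate hn)))

theorem tukey_kRel_of_forall_mem_CSpt {A : TRel}
    (φ : A.rng → Set X) (hφ : ∀ a, IsCompact (φ a))
    (h : ∀ x S, S ∈ CSpt x → ∃ d, ∀ a, A.rel d a → NotClosedIn S (φ a)) :
    A.Tukey (kRel X) := by
  have hS : ∀ S : CS X, ∃ d, ∀ a, A.rel d a → NotClosedIn S.1 (φ a) := fun ⟨S, hS⟩ =>
    let ⟨x, hx⟩ := exists_mem_CSpt_of_mem_CS hS
    h x S hx
  choose ψ hψ using hS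
  exact ⟨ψ, fun a => ⟨φ a, hφ a⟩, hψ⟩

end ConvergentSequences

section Envelope

open Metric

theorem isCompact_union_iUnion_of_subset_cthickening {M : Type*} [PseudoMetricSpace M]
    {B : Set M} (hB : IsCompact B) {E : ℕ → Set M} (hE : ∀ k, IsCompact (E k))
    {δ : ℕ → ℝ} (hδ : Tendsto δ atTop (𝓝 0))
    (hEB : ∀ k, E k ⊆ cthickening (δ k) B) : IsCompact (B ∪ ⋃ k, E k) := by
  classical
  refine isCompact_of_finite_subcover fun U hU hcov => ?_
  obtain ⟨t₀, ht₀⟩ := hB.elim_finite_subcover U hU (subset_union_left.trans hcov)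
  obtain ⟨ε, hε, hεU⟩ :=
    hB.exists_thickening_subset_open (isOpen_biUnion fun i _ => hU i) ht₀
  obtain ⟨N, hN⟩ := eventually_atTop.1 (hδ.eventually (gt_mem_nhds hε))
  obtain ⟨t₁, ht₁⟩ := (isCompact_accumulate hE N).elim_finite_subcover U hU
    ((accumulate_subset_iUnion N).trans (subset_union_right.trans hcov))
  refine ⟨t₀ ∪ t₁, ?_⟩
  rw [Finset.set_biUnion_union]
  rintro y (hy | hy)
  · exact Or.inl (ht₀ hy)
  obtain ⟨k, hk⟩ := mem_iUnion.1 hy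
  rcases le_total N k with hNk | hkN
  · exact Or.inl (hεU (cthickening_subset_thickening' hε (hN k hNk) B (hEB k hk)))
  · exact Or.inr (ht₁ (mem_accumulate.2 ⟨k, hkN, hk⟩))

variable {M : Type*} [MetricSpace M] [SigmaCompactSpace M]

def envelope (B : Set M) (f : ℕ → ℕ) : Set M :=
  B ∪ ⋃ k : ℕ, compactCovering M (f k) ∩ cthickening (1 / ((k : ℝ) + 1)) B

theorem isCompact_envelope {B : Set M} (hB : IsCompact B) (f : ℕ → ℕ) :
    IsCompact (envelope B f) :=
  isCompact_union_iUnion_of_subset_cthickening hB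
    (fun _ => (isCompact_compactCovering M _).inter_right isClosed_cthickening)
    tendsto_one_div_add_atTop_nhds_zero_nat fun _ => inter_subset_right

theorem exists_notClosedIn_envelope {S : Set M} {x : M} (hS : S ∈ CSpt x) :
    ∃ g : ℕ → ℕ, ∀ B, x ∈ B → ∀ f, leInf g f → NotClosedIn S (envelope B f) := by
  obtain ⟨u, hx, hlim, rfl⟩ := exists_seq_of_mem_CSpt hS
  obtain ⟨a, ha, hclose⟩ := extraction_forall_of_eventually fun k : ℕ =>
    hlim.eventually_mem (closedBall_mem_nhds x (Nat.one_div_pos_of_nat (n := k)))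
  choose idx hidx using fun y : M => exists_mem_compactCovering y
  refine ⟨fun k => idx (u (a k)), fun B hxB f hgf => ?_⟩
  have hcaught : ∃ᶠ k in atTop, u (a k) ∈ envelope B f :=
    (Nat.frequently_atTop_iff_infinite.2 hgf).mono fun k hk => Or.inr <| mem_iUnion.2
      ⟨k, compactCovering_subset M hk (hidx _), mem_cthickening_of_dist_le _ x _ B hxB (hclose k)⟩
  exact (notClosedIn_range_iff hx hlim).2 ⟨Or.inl hxB, ha.tendsto_atTop.frequently hcaught⟩

end Envelope

section Separable

variable {X : Type*} [TopologicalSpace X]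

theorem sigmaCompactSpace_of_isSigmaCompact_nonIsolated [SeparableSpace X]
    (h : IsSigmaCompact (nonIsolated X)) : SigmaCompactSpace X := by
  obtain ⟨K, hK, hKU⟩ := h
  obtain ⟨D, hDc, hD⟩ := exists_countable_dense X
  refine SigmaCompactSpace.of_countable (range K ∪ singleton '' D)
    ((countable_range K).union (hDc.image _)) ?_ (eq_univ_of_forall fun y => ?_)
  · rintro _ (⟨n, rfl⟩ | ⟨y, -, rfl⟩)
    exacts [hK n, isCompact_singleton]
  by_cases hy : y ∈ nonIsolated X
  · obtain ⟨n, hn⟩ := mem_iUnion.1 (hKU ▸ hy)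
    exact ⟨K n, Or.inl ⟨n, rfl⟩, hn⟩
  · obtain ⟨z, hz, hzD⟩ := hD.inter_open_nonempty {y} (not_not.1 hy) (singleton_nonempty y)
    exact ⟨{y}, Or.inr ⟨y, mem_singleton_iff.1 hz ▸ hzD, rfl⟩, rfl⟩

theorem exists_monotone_isCompact_mem_nhds [SecondCountableTopology X] :
    ∃ L : ℕ → Set X, (∀ n, IsCompact (L n)) ∧ Monotone L ∧ ∀ x ∉ nonLC X, ∃ n, L n ∈ 𝓝 x := by
  have hK : ∀ x ∈ (nonLC X)ᶜ, ∃ K, IsCompact K ∧ K ∈ 𝓝 x := fun _ hx => not_not.1 hx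
  choose! K hKc hKx using hK
  obtain ⟨t, ht, htc, hcover⟩ := countable_cover_nhdsWithin
    fun x hx => mem_nhdsWithin_of_mem_nhds (interior_mem_nhds.2 (hKx x hx))
  -- `∅` only makes the family nonempty, so that it can be enumerated.
  obtain ⟨e, he⟩ := ((htc.image K).insert ∅).exists_eq_range (insert_nonempty _ _)
  have hec : ∀ n, IsCompact (e n) := fun n => by
    obtain h | ⟨y, hy, h⟩ : e n ∈ insert ∅ (K '' t) := he ▸ mem_range_self n
    · exact h ▸ isCompact_empty
    · exact h ▸ hKc y (ht hy)
  refine ⟨accumulate e, isCompact_accumulate hec, monotone_accumulate, fun x hx => ?_⟩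
  obtain ⟨y, hyt, hxy⟩ := mem_iUnion₂.1 (hcover hx)
  obtain ⟨n, hn⟩ : K y ∈ range e := he ▸ mem_insert_of_mem _ (mem_image_of_mem K hyt)
  exact ⟨n, mem_of_superset (mem_interior_iff_mem_nhds.1 hxy) (hn ▸ subset_accumulate)⟩

variable [MetrizableSpace X] [SeparableSpace X]

theorem exists_isCompact_superset_of_forall_countable {Y : Set X}
    (h : ∀ Q ⊆ Y, Q.Countable → ∃ K, IsCompact K ∧ Q ⊆ K) : ∃ K, IsCompact K ∧ Y ⊆ K := by
  obtain ⟨Q, hQY, hQc, hYQ⟩ := (IsSeparable.of_separableSpace Y).exists_countable_dense_subset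
  obtain ⟨K, hK, hQK⟩ := h Q hQY hQc
  exact ⟨K, hK, hYQ.trans (closure_minimal hQK hK.isClosed)⟩

theorem exists_isCompact_superset_of_forall_leInf {Y : Set X} {K : (ℕ → ℕ) → Set X}
    (hK : ∀ f, IsCompact (K f)) (h : ∀ y ∈ Y, ∃ g, ∀ f, leInf g f → y ∈ K f) :
    ∃ C, IsCompact C ∧ Y ⊆ C := by
  choose! g hg using h
  refine exists_isCompact_superset_of_forall_countable fun Q hQY hQc => ?_
  obtain ⟨f, hf⟩ := exists_forall_leInf_of_countable hQc g
  exact ⟨K f, hK f, fun q hq => hg q (hQY hq) f (hf q hq)⟩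

end Separable

section Necessity

variable {X : Type*} [TopologicalSpace X] [MetrizableSpace X]

theorem nonLC_eq_empty_of_omegaRel_tukey (h : omegaRel.Tukey (kRel X)) : nonLC X = ∅ := by
  obtain ⟨ψ, φ, hmor⟩ := h
  refine eq_empty_of_forall_notMem fun x hx => ?_
  obtain ⟨S, hS, hSφ⟩ := exists_mem_CSpt_forall_not_notClosedIn hx fun n => (φ n).2
  exact hSφ _ (hmor ⟨S, CSpt_subset_CS x hS⟩ _ le_rfl)

variable [SeparableSpace X]

theorem isCompact_nonIsolated_of_leInfRel_tukey (h : leInfRel.Tukey (kRel X)) :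
    IsCompact (nonIsolated X) := by
  obtain ⟨ψ, φ, hmor⟩ := h
  obtain ⟨C, hC, hsub⟩ := exists_isCompact_superset_of_forall_leInf (fun f => (φ f).2)
    fun x hx => by
      obtain ⟨S, hS⟩ := exists_mem_CSpt_of_mem_nonIsolated hx
      exact ⟨ψ ⟨S, CSpt_subset_CS x hS⟩, fun f hf => mem_of_notClosedIn hS (hmor _ f hf)⟩
  exact hC.of_isClosed_subset isClosed_nonIsolated hsub

theorem isSigmaCompact_nonIsolated_of_prod_tukey (h : (leInfRel.prod omegaRel).Tukey (kRel X)) :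
    IsSigmaCompact (nonIsolated X) := by
  obtain ⟨ψ, φ, hmor⟩ := h
  have hwit : ∀ x ∈ nonIsolated X, ∃ d : (ℕ → ℕ) × ℕ,
      ∀ f m, leInf d.1 f → d.2 ≤ m → x ∈ (φ (f, m)).1 := fun x hx => by
    obtain ⟨S, hS⟩ := exists_mem_CSpt_of_mem_nonIsolated hx
    exact ⟨ψ ⟨S, CSpt_subset_CS x hS⟩, fun f m hf hm =>
      mem_of_notClosedIn hS (hmor _ (f, m) ⟨hf, hm⟩)⟩
  choose! d hd using hwit
  have hlevel : ∀ m, ∃ C, IsCompact C ∧ {x ∈ nonIsolated X | (d x).2 ≤ m} ⊆ C := fun m =>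
    exists_isCompact_superset_of_forall_leInf (fun f => (φ (f, m)).2) fun x hx =>
      ⟨(d x).1, fun f hf => hd x hx.1 f m hf hx.2⟩
  choose C hCc hC using hlevel
  refine ⟨fun m => nonIsolated X ∩ C m, fun m => (hCc m).inter_left isClosed_nonIsolated, ?_⟩
  exact Subset.antisymm (iUnion_subset fun m => inter_subset_left) fun x hx =>
    mem_iUnion.2 ⟨(d x).2, hx, hC _ ⟨hx, le_rfl⟩⟩

theorem isCompact_nonLC_of_with_tukey (h : (leInfRel.with' omegaRel).Tukey (kRel X)) :
    IsCompact (nonLC X) := by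
  obtain ⟨ψ, φ, hmor⟩ := h
  obtain ⟨C, hC, hsub⟩ := exists_isCompact_superset_of_forall_leInf (fun f => (φ (f, (0 : ℕ))).2)
    fun x hx => by
      obtain ⟨S, hS, hSφ⟩ :=
        exists_mem_CSpt_forall_not_notClosedIn hx fun m => (φ ((0 : ℕ → ℕ), m)).2
      set b : CS X := ⟨S, CSpt_subset_CS x hS⟩
      -- `S` escapes every `φ (0, m)`, so `ψ b` must lie on the `≤_∞` side.
      rcases hb : ψ b with g | m
      · exact ⟨g, fun f hf => mem_of_notClosedIn hS (hmor b (f, (0 : ℕ)) (by rw [hb]; exact hf))⟩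
      · exact (hSφ m (hmor b ((0 : ℕ → ℕ), m) (by rw [hb]; exact le_rfl))).elim
  exact hC.of_isClosed_subset isClosed_nonLC hsub

end Necessity

theorem omegaRel_tukey_of_nonLC_eq_empty {X : Type*} [TopologicalSpace X] [T2Space X]
    [SecondCountableTopology X] (h : nonLC X = ∅) : omegaRel.Tukey (kRel X) := by
  obtain ⟨L, hLc, hLm, hL⟩ := exists_monotone_isCompact_mem_nhds (X := X)
  refine tukey_kRel_of_forall_mem_CSpt (A := omegaRel) L hLc fun x S hS => ?_
  obtain ⟨j, hj⟩ := hL x (h ▸ notMem_empty x)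
  exact ⟨j, fun n hjn => notClosedIn_of_mem_nhds hS (mem_of_superset hj (hLm hjn))⟩

section Sufficiency

variable {M : Type*} [MetricSpace M] [SeparableSpace M]

theorem leInfRel_tukey_of_isCompact_nonIsolated (h : IsCompact (nonIsolated M)) :
    leInfRel.Tukey (kRel M) := by
  have := sigmaCompactSpace_of_isSigmaCompact_nonIsolated h.isSigmaCompact
  refine tukey_kRel_of_forall_mem_CSpt (A := leInfRel) (envelope (nonIsolated M))
    (isCompact_envelope h) fun x S hS => ?_
  obtain ⟨g, hg⟩ := exists_notClosedIn_envelope hS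
  exact ⟨g, hg _ (mem_nonIsolated_of_mem_CSpt hS)⟩

theorem prod_tukey_of_isSigmaCompact_nonIsolated (h : IsSigmaCompact (nonIsolated M)) :
    (leInfRel.prod omegaRel).Tukey (kRel M) := by
  have := sigmaCompactSpace_of_isSigmaCompact_nonIsolated h
  refine tukey_kRel_of_forall_mem_CSpt (A := leInfRel.prod omegaRel)
    (fun a => envelope (compactCovering M a.2) a.1)
    (fun a => isCompact_envelope (isCompact_compactCovering M _) _) fun x S hS => ?_
  obtain ⟨g, hg⟩ := exists_notClosedIn_envelope hS
  obtain ⟨m, hm⟩ := exists_mem_compactCovering x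
  exact ⟨(g, m), fun a ha => hg _ (compactCovering_subset M ha.2 hm) _ ha.1⟩

theorem with_tukey_of_isSigmaCompact_of_isCompact_nonLC (hsig : IsSigmaCompact (nonIsolated M))
    (hcpt : IsCompact (nonLC M)) : (leInfRel.with' omegaRel).Tukey (kRel M) := by
  have := sigmaCompactSpace_of_isSigmaCompact_nonIsolated hsig
  have := UniformSpace.secondCountable_of_separable M
  obtain ⟨L, hLc, hLm, hL⟩ := exists_monotone_isCompact_mem_nhds (X := M)
  refine tukey_kRel_of_forall_mem_CSpt (A := leInfRel.with' omegaRel)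
    (fun a => envelope (nonLC M) a.1 ∪ L a.2)
    (fun a => (isCompact_envelope hcpt _).union (hLc _)) fun x S hS => ?_
  by_cases hx : x ∈ nonLC M
  · obtain ⟨g, hg⟩ := exists_notClosedIn_envelope hS
    exact ⟨Sum.inl g, fun a ha => (hg _ hx _ ha).mono subset_union_left⟩
  · obtain ⟨j, hj⟩ := hL x hx
    exact ⟨Sum.inr j, fun a ha =>
      (notClosedIn_of_mem_nhds hS (mem_of_superset hj (hLm ha))).mono subset_union_right⟩

end Sufficiency

/-- upper bounds for the k-structure of a separable metrizable space. -/
theorem kRel_upper_bounds (M : Type u) [TopologicalSpace M]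
    [TopologicalSpace.MetrizableSpace M] [TopologicalSpace.SeparableSpace M] :
    (omegaRel.Tukey (kRel M) ↔ nonLC M = ∅) ∧
    (leInfRel.Tukey (kRel M) ↔ IsCompact (nonIsolated M)) ∧
    ((leInfRel.with' omegaRel).Tukey (kRel M) ↔
      ((∃ K : ℕ → Set M, (∀ n, IsCompact (K n)) ∧ nonIsolated M = ⋃ n, K n) ∧
        IsCompact (nonLC M))) ∧
    ((leInfRel.prod omegaRel).Tukey (kRel M) ↔
      (∃ K : ℕ → Set M, (∀ n, IsCompact (K n)) ∧ nonIsolated M = ⋃ n, K n)) := by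
  let := metrizableSpaceMetric M
  have : SecondCountableTopology M := UniformSpace.secondCountable_of_separable M
  have hσ : (∃ K : ℕ → Set M, (∀ n, IsCompact (K n)) ∧ nonIsolated M = ⋃ n, K n) ↔
      IsSigmaCompact (nonIsolated M) := by
    simp only [IsSigmaCompact, eq_comm]
  rw [hσ]
  have hprod_with := TRel.prod_tukey_with leInfRel omegaRel (fun _ => 0 : ℕ → ℕ) (0 : ℕ)
  exact ⟨⟨nonLC_eq_empty_of_omegaRel_tukey, omegaRel_tukey_of_nonLC_eq_empty⟩,
    ⟨isCompact_nonIsolated_of_leInfRel_tukey, leInfRel_tukey_of_isCompact_nonIsolated⟩,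
    ⟨fun h => ⟨isSigmaCompact_nonIsolated_of_prod_tukey (hprod_with.trans h),
        isCompact_nonLC_of_with_tukey h⟩,
      fun h => with_tukey_of_isSigmaCompact_of_isCompact_nonLC h.1 h.2⟩,
    ⟨isSigmaCompact_nonIsolated_of_prod_tukey, prod_tukey_of_isSigmaCompact_nonIsolated⟩⟩
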